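/- Let P be a Poisson algebra over a field 𝔽 of characteristic p ≠ 2 (including p = 0). If P is solvable as a Lie algebra, then the Poisson ideal {P,P}·P is nil, i.e. every element of {P,P}·P is nilpotent. -/

import Mathlib

/-- A Poisson bracket on a commutative associative unital `F`-algebra `P`:
an `F`-bilinear, alternating bracket satisfying the Jacobi identity and the
Leibniz rule `{a·b, c} = a·{b,c} + b·{a,c}`. -/
structure PoissonBracket (F P : Type*) [Field F] [CommRing P] [Algebra F P] where
  bracket : P → P → P
  add_left : ∀ a b c : P, bracket (a + b) c = bracket a c + bracket b c
  smul_left : ∀ (r : F) (a b : P), bracket (r • a) b = r • bracket a b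
  add_right : ∀ a b c : P, bracket a (b + c) = bracket a b + bracket a c
  smul_right : ∀ (r : F) (a b : P), bracket a (r • b) = r • bracket a b
  alt : ∀ a : P, bracket a a = 0
  jacobi : ∀ a b c : P,
    bracket (bracket a b) c + bracket (bracket b c) a + bracket (bracket c a) b = 0
  leibniz : ∀ a b c : P, bracket (a * b) c = a * bracket b c + b * bracket a c

namespace PoissonBracket

variable {F P : Type*} [Field F] [CommRing P] [Algebra F P]

/-- `{A, B}`: the `F`-span of all brackets of elements of `A` with elements of `B`. -/
def lieSpan (pb : PoissonBracket F P) (A B : Submodule F P) : Submodule F P :=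
  Submodule.span F {z : P | ∃ a ∈ A, ∃ b ∈ B, z = pb.bracket a b}

/-- Upper derived series: `δ̃₀(P) = P`, `δ̃ₙ₊₁(P) = {δ̃ₙ(P), δ̃ₙ(P)}·P`. -/
def udelta (pb : PoissonBracket F P) : ℕ → Submodule F P
  | 0 => ⊤
  | n + 1 => pb.lieSpan (pb.udelta n) (pb.udelta n) * ⊤

/-- Derived series of a Lie ideal `I`: `δ₀(I) = I`, `δₙ₊₁(I) = {δₙ(I), δₙ(I)}`. -/
def dseries (pb : PoissonBracket F P) (I : Submodule F P) : ℕ → Submodule F P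
  | 0 => I
  | n + 1 => pb.lieSpan (pb.dseries I n) (pb.dseries I n)

/-- Lower central series of a Lie ideal `I`, indexed so that `lcs I 1 = γ₁(I) = I`
and `lcs I (n+1) = γₙ₊₁(I) = {γₙ(I), I}` for `n ≥ 1` (index `0` is a dummy equal to `I`). -/
def lcs (pb : PoissonBracket F P) (I : Submodule F P) : ℕ → Submodule F P
  | 0 => I
  | 1 => I
  | n + 2 => pb.lieSpan (pb.lcs I (n + 1)) I

/-- Upper Lie power series: `P⁽¹⁾ = P`, `P⁽ⁿ⁾ = {P⁽ⁿ⁻¹⁾, P}·P` for `n > 1`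
(index `0` is a dummy equal to `P`). -/
def ulps (pb : PoissonBracket F P) : ℕ → Submodule F P
  | 0 => ⊤
  | 1 => ⊤
  | n + 2 => pb.lieSpan (pb.ulps (n + 1)) ⊤ * ⊤

/-- A Poisson ideal: an ideal for the associative product which is also a Lie ideal. -/
def IsPoissonIdeal (pb : PoissonBracket F P) (I : Submodule F P) : Prop :=
  (∀ x ∈ I, ∀ p : P, p * x ∈ I) ∧ (∀ x ∈ I, ∀ p : P, pb.bracket x p ∈ I)

/-- The Poisson ideal generated by a set `S`: the smallest Poisson ideal containing `S`. -/
def poissonSpan (pb : PoissonBracket F P) (S : Set P) : Submodule F P :=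
  sInf {I : Submodule F P | pb.IsPoissonIdeal I ∧ S ⊆ I}

end PoissonBracket

open PoissonBracket

/-! Let `I` be a radical ideal, `B` a Lie ideal and `A = {B,B}` with `{A,A} ⊆ I`. For `u ∈ A`,
`{u,{u,x²}} = 2x{u,{u,x}} + 2{u,x}²` puts `{u,x}²`, hence `{u,x}`, in `I`. For `a, b ∈ B` and
`u = {a,b}` one has `bu = ½{a,b²} ∈ B`; expanding `{{a,{bu,x}},f}` by the Leibniz rule gives
`u{{a,{b,x}},f} ∈ I`, its cases `(x, f) = (by, a), (y, a)` combine to `u²{a,{b,y}} ∈ I`, and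
`y = ab` gives `u⁴ ∈ I`. So `A ⊆ I`, and climbing down the derived series from `δₙ(P) = 0`
with `I` the nilradical shows that `{P,P}`, hence the ideal `{P,P}·P`, is nil. -/

namespace PoissonBracket

variable {F P : Type*} [Field F] [CommRing P] [Algebra F P] (pb : PoissonBracket F P)

theorem bracket_zero_left (b : P) : pb.bracket 0 b = 0 := by
  simpa using pb.smul_left 0 0 b

theorem bracket_neg_right (a b : P) : pb.bracket a (-b) = -pb.bracket a b := by
  simpa using pb.smul_right (-1) a b

theorem bracket_swap (a b : P) : pb.bracket a b = -pb.bracket b a := by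
  linear_combination pb.alt (a + b) - pb.add_left a b (a + b) - pb.add_right a a b
    - pb.add_right b a b - pb.alt a - pb.alt b

theorem leibniz_right (a s t : P) :
    pb.bracket a (s * t) = s * pb.bracket a t + t * pb.bracket a s := by
  linear_combination pb.bracket_swap a (s * t) - pb.leibniz s t a
    - s * pb.bracket_swap a t - t * pb.bracket_swap a s

theorem bracket_mem_lieSpan {A B : Submodule F P} {a b : P} (ha : a ∈ A) (hb : b ∈ B) :
    pb.bracket a b ∈ pb.lieSpan A B :=
  Submodule.subset_span ⟨a, ha, b, hb, rfl⟩

theorem lieSpan_bot_left (B : Submodule F P) : pb.lieSpan ⊥ B = ⊥ := by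
  refine Submodule.span_eq_bot.mpr ?_
  rintro _ ⟨a, ha, b, -, rfl⟩
  rw [(Submodule.mem_bot F).mp ha, pb.bracket_zero_left]

theorem dseries_succ_eq_dseries_lieSpan (B : Submodule F P) (n : ℕ) :
    pb.dseries B (n + 1) = pb.dseries (pb.lieSpan B B) n := by
  induction n with
  | zero => rfl
  | succ n ih => rw [dseries, ih, dseries]

def IsLieIdeal (B : Submodule F P) : Prop :=
  ∀ x ∈ B, ∀ y : P, pb.bracket x y ∈ B

theorem isLieIdeal_top : pb.IsLieIdeal ⊤ := fun _ _ _ => Submodule.mem_top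

variable {pb}

theorem IsLieIdeal.bracket_mem_right {B : Submodule F P} (hB : pb.IsLieIdeal B) {x : P}
    (hx : x ∈ B) (y : P) : pb.bracket y x ∈ B := by
  rw [pb.bracket_swap]
  exact B.neg_mem (hB x hx y)

theorem IsLieIdeal.lieSpan_self {B : Submodule F P} (hB : pb.IsLieIdeal B) :
    pb.IsLieIdeal (pb.lieSpan B B) := by
  intro x hx y
  induction hx using Submodule.span_induction with
  | mem z hz =>
    obtain ⟨a, ha, b, hb, rfl⟩ := hz
    have jacobi : pb.bracket (pb.bracket a b) y
        = -(pb.bracket (pb.bracket b y) a + pb.bracket (pb.bracket y a) b) := by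
      linear_combination pb.jacobi a b y
    rw [jacobi]
    exact Submodule.neg_mem _ (Submodule.add_mem _ (pb.bracket_mem_lieSpan (hB b hb y) ha)
      (pb.bracket_mem_lieSpan (hB.bracket_mem_right ha y) hb))
  | zero => simpa only [pb.bracket_zero_left] using Submodule.zero_mem _
  | add u v _ _ hu hv => rw [pb.add_left]; exact Submodule.add_mem _ hu hv
  | smul r u _ hu => rw [pb.smul_left]; exact Submodule.smul_mem _ _ hu

theorem mem_of_add_self_mem {M : Type*} [AddCommGroup M] [Module F M] (h2 : (2 : F) ≠ 0)
    {S : Submodule F M} {x : M} (h : x + x ∈ S) : x ∈ S :=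
  (S.smul_mem_iff h2).mp (by rwa [two_smul])

theorem IsLieIdeal.mul_bracket_mem (h2 : (2 : F) ≠ 0) {B : Submodule F P}
    (hB : pb.IsLieIdeal B) {a b : P} (ha : a ∈ B) : b * pb.bracket a b ∈ B := by
  refine mem_of_add_self_mem h2 ?_
  have key : b * pb.bracket a b + b * pb.bracket a b = pb.bracket a (b * b) := by
    rw [pb.leibniz_right]
  rw [key]
  exact hB a ha _

variable {I : Ideal P}

theorem bracket_mem_of_forall_bracket_bracket_mem (h2 : (2 : F) ≠ 0) (hI : I.IsRadical)
    {u : P} (hu : ∀ y, pb.bracket u (pb.bracket u y) ∈ I) (x : P) : pb.bracket u x ∈ I := by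
  have key : pb.bracket u x * pb.bracket u x + pb.bracket u x * pb.bracket u x
      = pb.bracket u (pb.bracket u (x * x))
        - x * pb.bracket u (pb.bracket u x) - x * pb.bracket u (pb.bracket u x) := by
    rw [pb.leibniz_right u x x, pb.add_right, pb.leibniz_right u x]
    ring
  refine hI ⟨2, ?_⟩
  rw [sq]
  refine mem_of_add_self_mem h2 (S := I.restrictScalars F) ?_
  rw [Submodule.restrictScalars_mem, key]
  exact I.sub_mem (I.sub_mem (hu _) (I.mul_mem_left _ (hu x))) (I.mul_mem_left _ (hu x))

section DerivedSquare

variable {B : Submodule F P}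

theorem bracket_mem_of_mem_lieSpan (h2 : (2 : F) ≠ 0) (hI : I.IsRadical) (hB : pb.IsLieIdeal B)
    (hBB : pb.lieSpan (pb.lieSpan B B) (pb.lieSpan B B) ≤ I.restrictScalars F)
    {u : P} (hu : u ∈ pb.lieSpan B B) (x : P) : pb.bracket u x ∈ I :=
  bracket_mem_of_forall_bracket_bracket_mem h2 hI
    (fun y => hBB (pb.bracket_mem_lieSpan hu (hB.lieSpan_self u hu y))) x

theorem bracket_mul_bracket_bracket_bracket_mem (h2 : (2 : F) ≠ 0) (hI : I.IsRadical)
    (hB : pb.IsLieIdeal B)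
    (hBB : pb.lieSpan (pb.lieSpan B B) (pb.lieSpan B B) ≤ I.restrictScalars F)
    {a b : P} (ha : a ∈ B) (hb : b ∈ B) (x f : P) :
    pb.bracket a b * pb.bracket (pb.bracket a (pb.bracket b x)) f ∈ I := by
  have hA := hB.lieSpan_self
  have memI : ∀ v ∈ pb.lieSpan B B, ∀ y, pb.bracket v y ∈ I :=
    fun v hv => bracket_mem_of_mem_lieSpan h2 hI hB hBB hv
  have memI' : ∀ v ∈ pb.lieSpan B B, ∀ y, pb.bracket y v ∈ I := fun v hv y => by
    rw [pb.bracket_swap]; exact I.neg_mem (memI v hv y)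
  have hu : pb.bracket a b ∈ pb.lieSpan B B := pb.bracket_mem_lieSpan ha hb
  have hm : pb.bracket (pb.bracket a b) x ∈ pb.lieSpan B B := hA _ hu x
  have expand : pb.bracket a b * pb.bracket (pb.bracket a (pb.bracket b x)) f
      = pb.bracket (pb.bracket a (pb.bracket (b * pb.bracket a b) x)) f
        - b * pb.bracket (pb.bracket a (pb.bracket (pb.bracket a b) x)) f
        - pb.bracket a (pb.bracket (pb.bracket a b) x) * pb.bracket b f
        - pb.bracket (pb.bracket a b) x * pb.bracket (pb.bracket a b) f
        - pb.bracket a b * pb.bracket (pb.bracket (pb.bracket a b) x) f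
        - pb.bracket b x * pb.bracket (pb.bracket a (pb.bracket a b)) f
        - pb.bracket a (pb.bracket a b) * pb.bracket (pb.bracket b x) f
        - pb.bracket a (pb.bracket b x) * pb.bracket (pb.bracket a b) f := by
    rw [pb.leibniz b, pb.add_right, pb.leibniz_right a b, pb.leibniz_right a (pb.bracket a b),
      pb.add_left, pb.add_left, pb.add_left, pb.leibniz, pb.leibniz, pb.leibniz, pb.leibniz]
    ring
  rw [expand]
  refine I.sub_mem (I.sub_mem (I.sub_mem (I.sub_mem (I.sub_mem (I.sub_mem (I.sub_mem ?_ ?_) ?_)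
    ?_) ?_) ?_) ?_) ?_
  · exact memI _ (pb.bracket_mem_lieSpan ha (hB _ (hB.mul_bracket_mem h2 ha) x)) f
  · exact I.mul_mem_left _ (memI _ (hA.bracket_mem_right hm a) f)
  · exact I.mul_mem_right _ (memI' _ hm a)
  · exact I.mul_mem_right _ (memI _ hu x)
  · exact I.mul_mem_left _ (memI _ hm f)
  · exact I.mul_mem_left _ (memI _ (hA.bracket_mem_right hu a) f)
  · exact I.mul_mem_right _ (memI' _ hu a)
  · exact I.mul_mem_left _ (memI _ hu f)

theorem bracket_mul_self_mul_bracket_bracket_mem (h2 : (2 : F) ≠ 0) (hI : I.IsRadical)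
    (hB : pb.IsLieIdeal B)
    (hBB : pb.lieSpan (pb.lieSpan B B) (pb.lieSpan B B) ≤ I.restrictScalars F)
    {a b : P} (ha : a ∈ B) (hb : b ∈ B) (y : P) :
    pb.bracket a b * pb.bracket a b * pb.bracket a (pb.bracket b y) ∈ I := by
  have key := bracket_mul_bracket_bracket_bracket_mem h2 hI hB hBB ha hb
  have hbby : pb.bracket b (b * y) = b * pb.bracket b y := by
    rw [pb.leibniz_right, pb.alt, mul_zero, add_zero]
  have expand : pb.bracket a b * pb.bracket a b * pb.bracket a (pb.bracket b y)
        + pb.bracket a b * pb.bracket a b * pb.bracket a (pb.bracket b y)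
      = b * (pb.bracket a b * pb.bracket (pb.bracket a (pb.bracket b y)) a)
        + pb.bracket a b * pb.bracket b y * pb.bracket (pb.bracket a b) a
        - pb.bracket a b * pb.bracket (pb.bracket a (pb.bracket b (b * y))) a := by
    rw [hbby, pb.leibniz_right a b, pb.add_left, pb.leibniz, pb.leibniz, pb.bracket_swap b a,
      pb.bracket_swap (pb.bracket b y) a]
    ring
  refine mem_of_add_self_mem h2 (S := I.restrictScalars F) ?_
  rw [Submodule.restrictScalars_mem, expand]
  exact I.sub_mem (I.add_mem (I.mul_mem_left _ (key y a)) (I.mul_mem_left _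
    (bracket_mem_of_mem_lieSpan h2 hI hB hBB (pb.bracket_mem_lieSpan ha hb) a))) (key _ a)

theorem bracket_mem_of_mem (h2 : (2 : F) ≠ 0) (hI : I.IsRadical) (hB : pb.IsLieIdeal B)
    (hBB : pb.lieSpan (pb.lieSpan B B) (pb.lieSpan B B) ≤ I.restrictScalars F)
    {a b : P} (ha : a ∈ B) (hb : b ∈ B) : pb.bracket a b ∈ I := by
  have hau : pb.bracket a (pb.bracket a b) ∈ I := by
    rw [pb.bracket_swap]
    exact I.neg_mem
      (bracket_mem_of_mem_lieSpan h2 hI hB hBB (pb.bracket_mem_lieSpan ha hb) a)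
  have expand : pb.bracket a b ^ 4
      = -(pb.bracket a b * pb.bracket a b * pb.bracket a (pb.bracket b (a * b)))
        - pb.bracket a b * pb.bracket a b * b * pb.bracket a (pb.bracket a b) := by
    have hbab : pb.bracket b (a * b) = -(b * pb.bracket a b) := by
      rw [pb.leibniz_right, pb.alt, pb.bracket_swap b a]
      ring
    rw [hbab, pb.bracket_neg_right, pb.leibniz_right]
    ring
  refine hI ⟨4, ?_⟩
  rw [expand]
  exact I.sub_mem (I.neg_mem (bracket_mul_self_mul_bracket_bracket_mem h2 hI hB hBB ha hb _))
    (I.mul_mem_left _ hau)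

theorem lieSpan_self_le_of_lieSpan_lieSpan_le (h2 : (2 : F) ≠ 0) (hI : I.IsRadical)
    (hB : pb.IsLieIdeal B)
    (hBB : pb.lieSpan (pb.lieSpan B B) (pb.lieSpan B B) ≤ I.restrictScalars F) :
    pb.lieSpan B B ≤ I.restrictScalars F := by
  refine Submodule.span_le.mpr ?_
  rintro _ ⟨a, ha, b, hb, rfl⟩
  exact bracket_mem_of_mem h2 hI hB hBB ha hb

end DerivedSquare

theorem lieSpan_self_le_of_dseries_le (h2 : (2 : F) ≠ 0) (hI : I.IsRadical)
    {B : Submodule F P} (hB : pb.IsLieIdeal B) {n : ℕ}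
    (h : pb.dseries B (n + 1) ≤ I.restrictScalars F) :
    pb.lieSpan B B ≤ I.restrictScalars F := by
  induction n generalizing B with
  | zero => exact h
  | succ n ih =>
    exact lieSpan_self_le_of_lieSpan_lieSpan_le h2 hI hB
      (ih hB.lieSpan_self (by rwa [← dseries_succ_eq_dseries_lieSpan]))

end PoissonBracket

/-- Over a field of characteristic `p ≠ 2` (possibly `0`), if `P` is solvable as a
Lie algebra then the Poisson ideal `{P,P}·P` is nil. -/
theorem solvable_lieSpan_mul_top_isNil
    {F P : Type*} [Field F] [CommRing P] [Algebra F P]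
    (p : ℕ) [CharP F p] (hp : p ≠ 2)
    (pb : PoissonBracket F P)
    (hsolv : ∃ n : ℕ, pb.dseries ⊤ n = ⊥) :
    ∀ x ∈ pb.lieSpan ⊤ ⊤ * (⊤ : Submodule F P), IsNilpotent x := by
  obtain ⟨n, hn⟩ := hsolv
  have h2 : (2 : F) ≠ 0 := Ring.two_ne_zero (by rwa [ringChar.eq F p])
  have hnil : pb.lieSpan ⊤ ⊤ ≤ (nilradical P).restrictScalars F := by
    refine lieSpan_self_le_of_dseries_le h2 (I := nilradical P) (Ideal.radical_isRadical 0)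
      pb.isLieIdeal_top (n := n) ?_
    rw [dseries, hn, lieSpan_bot_left]
    exact bot_le
  have hmul : pb.lieSpan ⊤ ⊤ * ⊤ ≤ (nilradical P).restrictScalars F :=
    Submodule.mul_le.mpr fun a ha q _ => (nilradical P).mul_mem_right q (hnil ha)
  intro x hx
  exact mem_nilradical.mp (hmul hx)
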